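/- (Analytic core of Theorem 3: the 2.005-approximation guarantee.) Let u₁, u₂ be real numbers with u₁ ≥ u₂ and set δ = u₁ − u₂. Let θ > 0 and let l_δ, u_δ be real numbers with 0 ≤ l_δ ≤ δ ≤ u_δ and u_δ − l_δ ≤ θ. Define E = u₁·Φ(δ/θ) + u₂·Φ(−δ/θ) + θ·φ(δ/θ) and g = u₁·Φ(u_δ/θ) + u₂·(1 − Φ(u_δ/θ)) + θ·φ(l_δ/θ). If δ ≤ E and θ ≤ √(2π)·E, then g ≤ (1 + (√(2π) + √e)/√(2πe))·E, where e is Euler's number and the constant 1 + (√(2π) + √e)/√(2πe) ≈ 2.005. -/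

import Mathlib

set_option maxHeartbeats 1000000


open MeasureTheory ProbabilityTheory Real

/-- Standard normal p.d.f. -/
noncomputable def phi (w : ℝ) : ℝ := (1 / Real.sqrt (2 * Real.pi)) * Real.exp (-w ^ 2 / 2)

/-- Standard normal c.d.f. -/
noncomputable def Phi (w : ℝ) : ℝ := ∫ u in Set.Iic w, phi u

lemma phi_eq' : phi = fun w : ℝ => (1 / Real.sqrt (2 * Real.pi)) * Real.exp (-(1/2) * w ^ 2) := by
  funext w
  unfold phi
  ring_nf

lemma phi_pos (w : ℝ) : 0 < phi w := by
  unfold phi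
  have : (0:ℝ) < Real.sqrt (2 * Real.pi) := Real.sqrt_pos.2 (by positivity)
  positivity

lemma phi_even (w : ℝ) : phi (-w) = phi w := by
  unfold phi
  rw [neg_sq]

lemma phi_le (w : ℝ) : phi w ≤ 1 / Real.sqrt (2 * Real.pi) := by
  unfold phi
  have h1 : Real.exp (-w ^ 2 / 2) ≤ 1 := Real.exp_le_one_iff.2 (by nlinarith [sq_nonneg w])
  have h2 : (0:ℝ) ≤ 1 / Real.sqrt (2 * Real.pi) := by positivity
  nlinarith

lemma integrable_phi : Integrable phi := by
  rw [phi_eq']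
  exact (integrable_exp_neg_mul_sq (by norm_num : (0:ℝ) < 1/2)).const_mul _

lemma integral_phi : ∫ w : ℝ, phi w = 1 := by
  rw [phi_eq', integral_const_mul, integral_gaussian]
  rw [show Real.pi / (1/2) = 2 * Real.pi by ring]
  have : (0:ℝ) < Real.sqrt (2 * Real.pi) := Real.sqrt_pos.2 (by positivity)
  field_simp

lemma Phi_neg (c : ℝ) : Phi (-c) = 1 - Phi c := by
  have h1 : Phi (-c) = ∫ x in Set.Ioi c, phi x := by
    unfold Phi
    calc (∫ u in Set.Iic (-c), phi u) = ∫ u in Set.Iic (-c), phi (-u) := by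
          simp only [phi_even]
      _ = ∫ u in Set.Ioi (-(-c)), phi u := integral_comp_neg_Iic (-c) phi
      _ = ∫ u in Set.Ioi c, phi u := by rw [neg_neg]
  have h2 : Phi c + Phi (-c) = 1 := by
    rw [h1]
    unfold Phi
    rw [intervalIntegral.integral_Iic_add_Ioi integrable_phi.integrableOn integrable_phi.integrableOn,
      integral_phi]
  linarith

lemma Phi_diff_le {x y : ℝ} (hx : 0 ≤ x) (hxy : x ≤ y) :
    Phi y - Phi x ≤ (y - x) * phi x := by
  have hint : ∀ a b : ℝ, IntervalIntegrable phi volume a b :=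
    fun a b => integrable_phi.intervalIntegrable
  have h1 : Phi y - Phi x = ∫ u in x..y, phi u := by
    unfold Phi
    exact intervalIntegral.integral_Iic_sub_Iic integrable_phi.integrableOn integrable_phi.integrableOn
  rw [h1]
  calc (∫ u in x..y, phi u) ≤ ∫ _u in x..y, phi x := by
        apply intervalIntegral.integral_mono_on hxy (hint x y) intervalIntegrable_const
        intro u hu
        unfold phi
        have hux : x ≤ u := hu.1
        have : Real.exp (-u ^ 2 / 2) ≤ Real.exp (-x ^ 2 / 2) := by
          apply Real.exp_le_exp.2
          nlinarith
        have h2 : (0:ℝ) ≤ 1 / Real.sqrt (2 * Real.pi) := by positivity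
        nlinarith
    _ = (y - x) * phi x := by
        rw [intervalIntegral.integral_const, smul_eq_mul]

lemma hasDerivAt_phi (w : ℝ) : HasDerivAt phi (-w * phi w) w := by
  have h1 : HasDerivAt (fun w : ℝ => -w ^ 2 / 2) (-w) w := by
    have := ((hasDerivAt_pow 2 w).neg.div_const 2)
    refine this.congr_deriv ?_
    simp
    ring
  have h2 := h1.exp
  have h3 := h2.const_mul (1 / Real.sqrt (2 * Real.pi))
  refine h3.congr_deriv ?_
  unfold phi
  ring

lemma abs_deriv_phi_le (w : ℝ) :
    |(-w * phi w)| ≤ 1 / Real.sqrt (2 * Real.pi * Real.exp 1) := by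
  have hsπ : (0:ℝ) < Real.sqrt (2 * Real.pi) := Real.sqrt_pos.2 (by positivity)
  have key : |w| * Real.exp (-w ^ 2 / 2) ≤ Real.exp (-(1/2)) := by
    have h1 : |w| ≤ (w ^ 2 + 1) / 2 := by
      nlinarith [sq_nonneg (|w| - 1), sq_abs w]
    have h2 : (w ^ 2 + 1) / 2 ≤ Real.exp ((w ^ 2 - 1) / 2) := by
      have := Real.add_one_le_exp ((w ^ 2 - 1) / 2)
      linarith
    calc |w| * Real.exp (-w ^ 2 / 2)
        ≤ Real.exp ((w ^ 2 - 1) / 2) * Real.exp (-w ^ 2 / 2) :=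
          mul_le_mul_of_nonneg_right (h1.trans h2) (Real.exp_pos _).le
      _ = Real.exp (-(1/2)) := by rw [← Real.exp_add]; ring_nf
  have hK : Real.sqrt (2 * Real.pi * Real.exp 1)
      = Real.sqrt (2 * Real.pi) * Real.exp (1/2) := by
    rw [Real.sqrt_mul (by positivity), Real.exp_half]
  rw [abs_mul, abs_neg, abs_of_pos (phi_pos w)]
  calc |w| * phi w = (1 / Real.sqrt (2 * Real.pi)) * (|w| * Real.exp (-w ^ 2 / 2)) := by
        unfold phi; ring
    _ ≤ (1 / Real.sqrt (2 * Real.pi)) * Real.exp (-(1/2)) :=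
        mul_le_mul_of_nonneg_left key (by positivity)
    _ = 1 / Real.sqrt (2 * Real.pi * Real.exp 1) := by
        rw [hK, show Real.exp (-(1/2:ℝ)) = (Real.sqrt (Real.exp 1))⁻¹ by
          rw [← Real.exp_half, ← Real.exp_neg]]
        rw [Real.exp_half]
        field_simp

lemma phi_diff_le {x y : ℝ} (hxy : x ≤ y) :
    phi x - phi y ≤ (y - x) * (1 / Real.sqrt (2 * Real.pi * Real.exp 1)) := by
  have hmvt : ‖phi y - phi x‖ ≤ (1 / Real.sqrt (2 * Real.pi * Real.exp 1)) * ‖y - x‖ := by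
    apply Convex.norm_image_sub_le_of_norm_hasDerivWithin_le
      (f' := fun w => -w * phi w)
      (fun w _ => (hasDerivAt_phi w).hasDerivWithinAt)
      (fun w _ => by rw [Real.norm_eq_abs]; exact abs_deriv_phi_le w)
      convex_univ (Set.mem_univ x) (Set.mem_univ y)
  rw [Real.norm_eq_abs, Real.norm_eq_abs] at hmvt
  have h1 : phi x - phi y ≤ |phi y - phi x| := by
    rw [abs_sub_comm]; exact le_abs_self _
  rw [abs_of_nonneg (by linarith : (0:ℝ) ≤ y - x)] at hmvt
  linarith [hmvt]

theorem approximation_guarantee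
    (u₁ u₂ θ lδ uδ : ℝ) (h12 : u₂ ≤ u₁) (hθ : 0 < θ)
    (hlδ : 0 ≤ lδ) (hδl : lδ ≤ u₁ - u₂) (hδu : u₁ - u₂ ≤ uδ)
    (hwidth : uδ - lδ ≤ θ)
    (hδE : u₁ - u₂ ≤ u₁ * Phi ((u₁ - u₂) / θ) + u₂ * Phi (-(u₁ - u₂) / θ)
        + θ * phi ((u₁ - u₂) / θ))
    (hθE : θ ≤ Real.sqrt (2 * Real.pi) *
        (u₁ * Phi ((u₁ - u₂) / θ) + u₂ * Phi (-(u₁ - u₂) / θ)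
          + θ * phi ((u₁ - u₂) / θ))) :
    u₁ * Phi (uδ / θ) + u₂ * (1 - Phi (uδ / θ)) + θ * phi (lδ / θ)
      ≤ (1 + (Real.sqrt (2 * Real.pi) + Real.sqrt (Real.exp 1))
            / Real.sqrt (2 * Real.pi * Real.exp 1)) *
        (u₁ * Phi ((u₁ - u₂) / θ) + u₂ * Phi (-(u₁ - u₂) / θ)
          + θ * phi ((u₁ - u₂) / θ)) := by
  set δ := u₁ - u₂ with hδdef
  have hδ0 : 0 ≤ δ := le_trans hlδ hδl
  set E := u₁ * Phi (δ / θ) + u₂ * Phi (-δ / θ) + θ * phi (δ / θ) with hEdef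
  have hsπ : (0:ℝ) < Real.sqrt (2 * Real.pi) := Real.sqrt_pos.2 (by positivity)
  have hse : (0:ℝ) < Real.sqrt (Real.exp 1) := Real.sqrt_pos.2 (Real.exp_pos 1)
  have hKeq : Real.sqrt (2 * Real.pi * Real.exp 1)
      = Real.sqrt (2 * Real.pi) * Real.sqrt (Real.exp 1) :=
    Real.sqrt_mul (by positivity) _
  have hE0 : 0 < E := by
    have := phi_pos (δ / θ)
    nlinarith
  -- rewrite E using Phi_neg
  have hPhiNeg : Phi (-δ / θ) = 1 - Phi (δ / θ) := by
    rw [neg_div]; exact Phi_neg _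
  have hErw : E = u₂ + δ * Phi (δ / θ) + θ * phi (δ / θ) := by
    rw [hEdef, hPhiNeg]; ring
  -- bounds on arguments
  have hcl : lδ / θ ≤ δ / θ := by gcongr
  have hcu : δ / θ ≤ uδ / θ := by gcongr
  have hc0 : 0 ≤ δ / θ := by positivity
  have key1 : Phi (uδ / θ) - Phi (δ / θ) ≤ (uδ / θ - δ / θ) * phi (δ / θ) :=
    Phi_diff_le hc0 hcu
  have key2 : phi (lδ / θ) - phi (δ / θ)
      ≤ (δ / θ - lδ / θ) * (1 / Real.sqrt (2 * Real.pi * Real.exp 1)) :=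
    phi_diff_le hcl
  have hfac1 : uδ / θ - δ / θ ≤ 1 := by
    rw [div_sub_div_same]; exact (div_le_one hθ).2 (by linarith)
  have hfac2 : θ * (δ / θ - lδ / θ) = δ - lδ := by field_simp
  have hphib := phi_le (δ / θ)
  have hφpos := (phi_pos (δ / θ)).le
  have step1 : δ * (Phi (uδ / θ) - Phi (δ / θ)) ≤ δ * phi (δ / θ) := by
    have h1 := mul_le_mul_of_nonneg_left key1 hδ0
    have h2 := mul_le_mul_of_nonneg_left (mul_le_mul_of_nonneg_right hfac1 hφpos) hδ0
    nlinarith [h1, h2]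
  have step2 : δ * phi (δ / θ) ≤ E * (1 / Real.sqrt (2 * Real.pi)) :=
    mul_le_mul hδE hphib hφpos hE0.le
  have step3 : θ * (phi (lδ / θ) - phi (δ / θ))
      ≤ (δ - lδ) * (1 / Real.sqrt (2 * Real.pi * Real.exp 1)) := by
    have h1 := mul_le_mul_of_nonneg_left key2 hθ.le
    calc θ * (phi (lδ / θ) - phi (δ / θ))
        ≤ θ * ((δ / θ - lδ / θ) * (1 / Real.sqrt (2 * Real.pi * Real.exp 1))) := h1
      _ = (δ - lδ) * (1 / Real.sqrt (2 * Real.pi * Real.exp 1)) := by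
          rw [← mul_assoc, hfac2]
  have step4 : (δ - lδ) * (1 / Real.sqrt (2 * Real.pi * Real.exp 1))
      ≤ E * (1 / Real.sqrt (Real.exp 1)) := by
    have h1 : δ - lδ ≤ Real.sqrt (2 * Real.pi) * E := le_trans (by linarith) hθE
    have h2 := mul_le_mul_of_nonneg_right h1
      (by positivity : (0:ℝ) ≤ 1 / Real.sqrt (2 * Real.pi * Real.exp 1))
    calc (δ - lδ) * (1 / Real.sqrt (2 * Real.pi * Real.exp 1))
        ≤ Real.sqrt (2 * Real.pi) * E * (1 / Real.sqrt (2 * Real.pi * Real.exp 1)) := h2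
      _ = E * (1 / Real.sqrt (Real.exp 1)) := by
          rw [hKeq]; field_simp
  have hgrw : u₁ * Phi (uδ / θ) + u₂ * (1 - Phi (uδ / θ)) + θ * phi (lδ / θ)
      = u₂ + δ * Phi (uδ / θ) + θ * phi (lδ / θ) := by
    rw [hδdef]; ring
  have hRHS : (1 + (Real.sqrt (2 * Real.pi) + Real.sqrt (Real.exp 1))
        / Real.sqrt (2 * Real.pi * Real.exp 1)) * E
      = E + E * (1 / Real.sqrt (2 * Real.pi)) + E * (1 / Real.sqrt (Real.exp 1)) := by
    rw [hKeq]; field_simp; ring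
  rw [hgrw, hRHS]
  nlinarith [step1, step2, step3, step4, hErw]
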